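/- Continuous dependence in C_b: Under the assumptions U ∈ C²(ℂ;ℝ), U(ψ) = u(|ψ|²), U_k := sup_{z∈ℂ}|∇^kU(z)| < ∞ for k = 0,1,2 with U₂ > 0, and with τ = 1/(4U₂²), the map φ ↦ ψ taking the initial data φ ∈ H¹(ℝ) to the unique solution ψ ∈ C_b(ℝ×[0,τ];ℂ) of the Duhamel equation is continuous from H¹(ℝ) to C_b(ℝ×[0,τ];ℂ). -/

import Mathlib

/-!  Common framework for the Schrödinger equation coupled to a nonlinear
oscillator (point nonlinearity), following Komech–Komech.

The Sobolev space `H¹(ℝ)` is described through the Fourier side: an element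
of `H¹(ℝ)` is (identified with) a measurable function `hat : ℝ → ℂ`
(its Fourier transform, nonunitary convention `φ̂(k) = ∫ e^{-ikx} φ(x) dx`)
such that `(1+k²)^{1/2} φ̂ ∈ L²(ℝ)`.  Since `φ̂ ∈ L¹`, the continuous
representative `φ(x) = (2π)⁻¹ ∫ e^{ikx} φ̂(k) dk` is defined pointwise, so
`φ(0)` makes sense.  Plancherel gives `‖φ‖²_{L²} = (2π)⁻¹∫|φ̂|²` and
`‖φ'‖²_{L²} = (2π)⁻¹∫ k²|φ̂|²`. -/

noncomputable section

open MeasureTheory Real Set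

namespace SNLS

/-- The Sobolev space `H¹(ℝ)`, described via the Fourier transform. -/
structure H1 : Type where
  hat : ℝ → ℂ
  meas : AEStronglyMeasurable hat (volume : Measure ℝ)
  finite : Integrable (fun k : ℝ => (1 + k ^ 2) * ‖hat k‖ ^ 2) volume

namespace H1

/-- The continuous (pointwise defined) representative of `φ ∈ H¹(ℝ)`:
the inverse Fourier transform, which converges absolutely. -/
def toFun (φ : H1) : ℝ → ℂ := fun x =>
  (2 * π)⁻¹ * ∫ k : ℝ, Complex.exp (Complex.I * ((k * x : ℝ) : ℂ)) * φ.hat k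

/-- `‖φ‖²_{L²} = ∫_ℝ |φ(x)|² dx`, computed on the Fourier side (Plancherel). -/
def l2NormSq (φ : H1) : ℝ := (2 * π)⁻¹ * ∫ k : ℝ, ‖φ.hat k‖ ^ 2

/-- `‖φ'‖²_{L²} = ∫_ℝ |φ'(x)|² dx`, computed on the Fourier side. -/
def derivL2NormSq (φ : H1) : ℝ := (2 * π)⁻¹ * ∫ k : ℝ, k ^ 2 * ‖φ.hat k‖ ^ 2

/-- `‖φ‖²_{H¹} = ‖φ‖²_{L²} + ‖φ'‖²_{L²}`. -/
def normSq (φ : H1) : ℝ := (2 * π)⁻¹ * ∫ k : ℝ, (1 + k ^ 2) * ‖φ.hat k‖ ^ 2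

/-- The `H¹` norm. -/
def norm (φ : H1) : ℝ := Real.sqrt φ.normSq

/-- The `H¹` distance. -/
def dist (φ ψ : H1) : ℝ :=
  Real.sqrt ((2 * π)⁻¹ * ∫ k : ℝ, (1 + k ^ 2) * ‖φ.hat k - ψ.hat k‖ ^ 2)

/-- The `H¹` inner product `⟨f,g⟩_{H¹} = ⟨f,g⟩_{L²} + ⟨f',g'⟩_{L²}`,
computed on the Fourier side. -/
def inner (φ ψ : H1) : ℂ :=
  (2 * π)⁻¹ * ∫ k : ℝ, ((1 + k ^ 2 : ℝ) : ℂ) * (starRingEnd ℂ (φ.hat k) * ψ.hat k)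

/-- Continuity of a curve in `H¹` on a set of times, w.r.t. the `H¹` distance. -/
def ContOn (Ψ : ℝ → H1) (S : Set ℝ) : Prop :=
  ∀ t₀ ∈ S, ∀ δ > 0, ∃ η > 0, ∀ t ∈ S, |t - t₀| < η → dist (Ψ t) (Ψ t₀) < δ

end H1

/-- The free Schrödinger group `W_t`, defined by `(W_tφ)^(k) = e^{ik²t} φ̂(k)`;
equivalently `(W_tφ)(x) = (2π)⁻¹ ∫ e^{ikx} e^{ik²t} φ̂(k) dk`. -/
def W (t : ℝ) (φ : H1) : ℝ → ℂ := fun x =>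
  (2 * π)⁻¹ * ∫ k : ℝ, Complex.exp (Complex.I * ((k * x + k ^ 2 * t : ℝ) : ℂ)) * φ.hat k

/-- The charge `Q(φ) = ½ ∫_ℝ |φ|² dx`. -/
def charge (φ : H1) : ℝ := (1 / 2) * φ.l2NormSq

/-- The energy `𝓗(φ) = ½ ∫_ℝ |φ'|² dx + U(φ(0))`. -/
def energy (U : ℂ → ℝ) (φ : H1) : ℝ := (1 / 2) * φ.derivL2NormSq + U (φ.toFun 0)

/-- The gradient `∇_ψ U` of `U : ℂ → ℝ` with respect to `(Re ψ, Im ψ)`,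
viewed as a complex number. -/
def grad (U : ℂ → ℝ) (z : ℂ) : ℂ :=
  ((fderiv ℝ U z 1 : ℝ) : ℂ) + ((fderiv ℝ U z Complex.I : ℝ) : ℂ) * Complex.I

/-- The nonlinearity `F(ψ) = -∇_ψ U(ψ)`. -/
def nonlin (U : ℂ → ℝ) (z : ℂ) : ℂ := -grad U z

/-- The kernel `(2πs)^{-1/2} e^{ix²/(2s)}` of the free propagator applied to
`δ(x)` (principal branch of the square root for negative times). -/
def freeKernel (s x : ℝ) : ℂ :=
  ((2 * π * s : ℝ) : ℂ) ^ (-(1 / 2 : ℂ)) *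
    Complex.exp (Complex.I * ((x ^ 2 : ℝ) : ℂ) / ((2 * s : ℝ) : ℂ))

/-- `ψ` solves, for all times in `S`, the Duhamel equation
`ψ(x,t) = W_tφ(x) − ∫_0^t (2πs)^{−1/2} e^{ix²/(2s)} F(ψ(0,t−s)) ds`
for the Schrödinger equation with point nonlinearity `F` and data `φ`. -/
def IsDuhamelSolution (F : ℂ → ℂ) (φ : H1) (ψ : ℝ → ℝ → ℂ) (S : Set ℝ) : Prop :=
  ∀ x : ℝ, ∀ t ∈ S,
    ψ x t = W t φ x - ∫ s in (0 : ℝ)..t, freeKernel s x * F (ψ 0 (t - s))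

/-- `ψ ∈ C_b(ℝ × S; ℂ)`: bounded and continuous on `ℝ × S`. -/
def CbOn (ψ : ℝ → ℝ → ℂ) (S : Set ℝ) : Prop :=
  ContinuousOn (fun p : ℝ × ℝ => ψ p.1 p.2) (Set.univ ×ˢ S) ∧
    ∃ M : ℝ, ∀ x : ℝ, ∀ t ∈ S, ‖ψ x t‖ ≤ M

/-- `t ↦ ψ(·,t)` takes values in `H¹(ℝ)` and is `H¹`-continuous on `S`. -/
def ContH1On (ψ : ℝ → ℝ → ℂ) (S : Set ℝ) : Prop :=
  ∃ Ψ : ℝ → H1, (∀ t ∈ S, ∀ x : ℝ, (Ψ t).toFun x = ψ x t) ∧ H1.ContOn Ψ S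

/-- A mollifying profile: `ρ₁ ∈ C₀^∞`, nonnegative, supported in `[-1,1]`,
of total integral `1`. -/
structure Mollifier : Type where
  ρ : ℝ → ℝ
  smooth : ContDiff ℝ (⊤ : ℕ∞) ρ
  supp : ∀ x : ℝ, x ∉ Set.Icc (-1 : ℝ) 1 → ρ x = 0
  nonneg : ∀ x : ℝ, 0 ≤ ρ x
  total : (∫ x : ℝ, ρ x) = 1

/-- `ρ_ε(x) = ε⁻¹ ρ₁(x/ε)`. -/
def rho (m : Mollifier) (ε : ℝ) : ℝ → ℝ := fun x => ε⁻¹ * m.ρ (x / ε)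

/-- The pairing `⟨g, ψ⟩ = ∫_ℝ g(x) ψ(x) dx`. -/
def pair (g : ℝ → ℝ) (ψ : ℝ → ℂ) : ℂ := ∫ x : ℝ, (g x : ℂ) * ψ x

/-- The `H¹` norm of an ordinary (smooth) function. -/
def h1NormFun (g : ℝ → ℝ) : ℝ :=
  Real.sqrt ((∫ x : ℝ, g x ^ 2) + ∫ x : ℝ, deriv g x ^ 2)

/-- The Fourier transform `ĝ(k) = ∫ e^{-ikx} g(x) dx` of a real function. -/
def fourierHatR (g : ℝ → ℝ) : ℝ → ℂ := fun k =>
  ∫ x : ℝ, Complex.exp (-(Complex.I * ((k * x : ℝ) : ℂ))) * (g x : ℂ)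

/-- The curve `Ψ : ℝ → H¹` solves, for times in `S`, the regularized Duhamel
equation `ψ_ε(t) = W_tφ − ∫_0^t W_s[ρ_ε · F(⟨ρ_ε, ψ_ε(t−s)⟩)] ds`
(with `g = ρ_ε`), written on the Fourier side, where it reads
`ψ̂_ε(t)(k) = e^{ik²t}φ̂(k) − ∫_0^t e^{ik²s} ĝ(k) F(⟨g, ψ_ε(t−s)⟩) ds`. -/
def IsRegularizedSolution (F : ℂ → ℂ) (g : ℝ → ℝ) (φ : H1) (Ψ : ℝ → H1)
    (S : Set ℝ) : Prop :=
  ∀ t ∈ S, ∀ k : ℝ,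
    (Ψ t).hat k =
      Complex.exp (Complex.I * ((k ^ 2 * t : ℝ) : ℂ)) * φ.hat k -
        ∫ s in (0 : ℝ)..t,
          Complex.exp (Complex.I * ((k ^ 2 * s : ℝ) : ℂ)) * fourierHatR g k *
            F (pair g (Ψ (t - s)).toFun)

/-- The regularized energy `𝓗_ε(ψ) = ½‖ψ'‖²_{L²} + U(⟨ρ_ε, ψ⟩)` (with `g = ρ_ε`). -/
def energyReg (U : ℂ → ℝ) (g : ℝ → ℝ) (φ : H1) : ℝ :=
  (1 / 2) * φ.derivL2NormSq + U (pair g φ.toFun)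

end SNLS
namespace SNLS

lemma H1.hat_integrable (φ : H1) : Integrable φ.hat := by
  have h1 : Integrable (fun k : ℝ => (1/2 : ℝ) * ((1 + k ^ 2)⁻¹ + (1 + k ^ 2) * ‖φ.hat k‖ ^ 2)) :=
    (integrable_inv_one_add_sq.add φ.finite).const_mul _
  refine h1.mono' φ.meas ?_
  filter_upwards with k
  have h2 : (0:ℝ) < 1 + k ^ 2 := by positivity
  have h3 : (0:ℝ) ≤ ‖φ.hat k‖ := norm_nonneg _
  have h4 : (1 + k^2)⁻¹ * (1 + k^2) = 1 := inv_mul_cancel₀ h2.ne'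
  nlinarith [sq_nonneg ((1 + k^2) * ‖φ.hat k‖ - 1), mul_pos h2 h2, sq_nonneg (‖φ.hat k‖)]

lemma integral_norm_le_sqrt (d : ℝ → ℂ) (hm : AEStronglyMeasurable d (volume : Measure ℝ))
    (hint : Integrable (fun k : ℝ => (1 + k ^ 2) * ‖d k‖ ^ 2) volume) :
    ∫ k : ℝ, ‖d k‖ ≤ Real.sqrt π * Real.sqrt (∫ k : ℝ, (1 + k ^ 2) * ‖d k‖ ^ 2) := by
  set f : ℝ → ℝ := fun k => Real.sqrt (1 + k ^ 2)⁻¹ with hf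
  set g : ℝ → ℝ := fun k => Real.sqrt (1 + k ^ 2) * ‖d k‖ with hg
  have hpos : ∀ k : ℝ, (0:ℝ) < 1 + k ^ 2 := fun k => by positivity
  have hfg : ∀ k, f k * g k = ‖d k‖ := by
    intro k
    rw [hf, hg]
    simp only
    rw [Real.sqrt_inv, ← mul_assoc,
      inv_mul_cancel₀ (by positivity : Real.sqrt (1 + k^2) ≠ 0), one_mul]
  have hfc : Continuous f :=
    Real.continuous_sqrt.comp ((continuous_const.add (continuous_pow 2)).inv₀ fun x => by simp only [Pi.add_apply]; positivity)
  have hf2n : ∀ k, f k ^ (2:ℕ) = (1 + k ^ 2)⁻¹ := fun k => Real.sq_sqrt (by positivity)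
  have hg2n : ∀ k, g k ^ (2:ℕ) = (1 + k ^ 2) * ‖d k‖ ^ 2 := by
    intro k
    rw [hg]
    simp only
    rw [mul_pow, Real.sq_sqrt (hpos k).le]
  have hf2 : ∀ k, f k ^ (2:ℝ) = (1 + k ^ 2)⁻¹ := by
    intro k
    rw [show (2:ℝ) = ((2:ℕ):ℝ) by norm_num, Real.rpow_natCast]
    exact hf2n k
  have hg2 : ∀ k, g k ^ (2:ℝ) = (1 + k ^ 2) * ‖d k‖ ^ 2 := by
    intro k
    rw [show (2:ℝ) = ((2:ℕ):ℝ) by norm_num, Real.rpow_natCast]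
    exact hg2n k
  have hmf : MemLp f (ENNReal.ofReal 2) volume := by
    rw [(by norm_num : ENNReal.ofReal 2 = (2 : ENNReal))]
    refine (memLp_two_iff_integrable_sq hfc.aestronglyMeasurable).2 ?_
    refine integrable_inv_one_add_sq.congr ?_
    filter_upwards with k
    rw [hf2n k]
  have hmg : MemLp g (ENNReal.ofReal 2) volume := by
    rw [(by norm_num : ENNReal.ofReal 2 = (2 : ENNReal))]
    refine (memLp_two_iff_integrable_sq ?_).2 ?_
    · exact ((Continuous.aestronglyMeasurable (by fun_prop)).mul hm.norm)
    · refine hint.congr ?_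
      filter_upwards with k
      rw [hg2n k]
  have hH := integral_mul_le_Lp_mul_Lq_of_nonneg (μ := volume) (p := 2) (q := 2)
    ⟨by norm_num, by norm_num, by norm_num⟩
    (Filter.Eventually.of_forall fun k => Real.sqrt_nonneg _)
    (Filter.Eventually.of_forall fun k => mul_nonneg (Real.sqrt_nonneg _) (norm_nonneg _))
    hmf hmg
  have e1 : ∫ k : ℝ, f k * g k = ∫ k : ℝ, ‖d k‖ :=
    integral_congr_ae (Filter.Eventually.of_forall hfg)
  have e2 : ∫ k : ℝ, f k ^ (2:ℝ) = π := by
    rw [integral_congr_ae (Filter.Eventually.of_forall hf2)]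
    exact integral_univ_inv_one_add_sq
  have e3 : ∫ k : ℝ, g k ^ (2:ℝ) = ∫ k : ℝ, (1 + k ^ 2) * ‖d k‖ ^ 2 :=
    integral_congr_ae (Filter.Eventually.of_forall hg2)
  rw [e1, e2, e3] at hH
  calc ∫ k : ℝ, ‖d k‖ ≤ π ^ (1/(2:ℝ)) * (∫ k : ℝ, (1 + k ^ 2) * ‖d k‖ ^ 2) ^ (1/(2:ℝ)) := hH
    _ = _ := by rw [← Real.sqrt_eq_rpow, ← Real.sqrt_eq_rpow]

lemma grad_differentiable (U : ℂ → ℝ) (hU : ContDiff ℝ 2 U) : Differentiable ℝ (grad U) := by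
  have h1 : Differentiable ℝ (fderiv ℝ U) :=
    (hU.fderiv_right (m := 1) (by norm_num)).differentiable one_ne_zero
  have h2 : Differentiable ℝ (fun z : ℂ => ((fderiv ℝ U z 1 : ℝ) : ℂ)) :=
    Complex.ofRealCLM.differentiable.comp (h1.clm_apply (differentiable_const _))
  have h3 : Differentiable ℝ (fun z : ℂ => ((fderiv ℝ U z Complex.I : ℝ) : ℂ)) :=
    Complex.ofRealCLM.differentiable.comp (h1.clm_apply (differentiable_const _))
  exact h2.add (h3.mul_const _)

lemma nonlin_lipschitz (U : ℂ → ℝ) (U₂ : ℝ) (hU : ContDiff ℝ 2 U)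
    (hU2 : ∀ z : ℂ, ‖fderiv ℝ (grad U) z‖ ≤ U₂) (a b : ℂ) :
    ‖nonlin U a - nonlin U b‖ ≤ U₂ * ‖a - b‖ := by
  have h := convex_univ.norm_image_sub_le_of_norm_fderiv_le
    (fun z _ => (grad_differentiable U hU) z) (fun z _ => hU2 z)
    (Set.mem_univ b) (Set.mem_univ a)
  rw [nonlin, nonlin, neg_sub_neg, norm_sub_rev]
  exact h

lemma norm_freeKernel {s : ℝ} (hs : 0 < s) (x : ℝ) :
    ‖freeKernel s x‖ = (2*π) ^ (-(1/2) : ℝ) * s ^ (-(1/2) : ℝ) := by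
  rw [freeKernel, norm_mul]
  have h2πs : (0:ℝ) < 2 * π * s := by positivity
  have e1 : ‖((2 * π * s : ℝ) : ℂ) ^ (-(1/2 : ℂ))‖ = (2*π) ^ (-(1/2) : ℝ) * s ^ (-(1/2) : ℝ) := by
    rw [Complex.norm_cpow_eq_rpow_re_of_pos h2πs]
    rw [show (-(1/2 : ℂ)).re = (-(1/2) : ℝ) by norm_num]
    rw [Real.mul_rpow (by positivity) hs.le]
  have e2 : ‖Complex.exp (Complex.I * ((x ^ 2 : ℝ) : ℂ) / ((2 * s : ℝ) : ℂ))‖ = 1 := by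
    rw [Complex.norm_exp]
    have : (Complex.I * ((x ^ 2 : ℝ) : ℂ) / ((2 * s : ℝ) : ℂ)).re = 0 := by
      simp [Complex.div_re, pow_two, Complex.mul_im]
    rw [this, Real.exp_zero]
  rw [e1, e2, mul_one]

lemma freeKernel_continuousOn (x t : ℝ) :
    ContinuousOn (fun s : ℝ => freeKernel s x) (Ioc 0 t) := by
  intro s hs
  apply ContinuousAt.continuousWithinAt
  apply ContinuousAt.mul
  · have h2 : ContinuousAt (fun r : ℝ => ((r : ℝ) : ℂ) ^ (-(1/2 : ℂ))) (2*π*s) :=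
      Complex.continuousAt_ofReal_cpow_const _ _ (Or.inr (mul_ne_zero (by positivity) hs.1.ne'))
    exact h2.comp (by fun_prop : ContinuousAt (fun s : ℝ => 2*π*s) s)
  · apply Complex.continuous_exp.continuousAt.comp
    apply ContinuousAt.div
    · fun_prop
    · fun_prop
    · simp only [ne_eq, Complex.ofReal_eq_zero]
      exact mul_ne_zero two_ne_zero hs.1.ne'

lemma sub_hat_sq_integrable (φ' φ : H1) :
    Integrable (fun k : ℝ => (1 + k ^ 2) * ‖φ'.hat k - φ.hat k‖ ^ 2) (volume : Measure ℝ) := by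
  refine ((φ'.finite.const_mul 2).add (φ.finite.const_mul 2)).mono' ?_ ?_
  · exact (Continuous.aestronglyMeasurable (by fun_prop)).mul
      (((φ'.meas.sub φ.meas).norm).pow 2)
  · filter_upwards with k
    have h1 := norm_sub_le (φ'.hat k) (φ.hat k)
    have h2 : (0:ℝ) < 1 + k^2 := by positivity
    have h3 : ‖φ'.hat k - φ.hat k‖ ^ 2 ≤ 2 * ‖φ'.hat k‖ ^ 2 + 2 * ‖φ.hat k‖ ^ 2 := by
      nlinarith [sq_nonneg (‖φ'.hat k‖ - ‖φ.hat k‖), norm_nonneg (φ'.hat k - φ.hat k),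
        norm_nonneg (φ'.hat k), norm_nonneg (φ.hat k)]
    rw [Real.norm_eq_abs, abs_of_nonneg (by positivity)]
    simp only [Pi.add_apply]
    nlinarith [mul_le_mul_of_nonneg_left h3 h2.le]

lemma W_sub_norm_le (φ' φ : H1) (t x : ℝ) :
    ‖W t φ' x - W t φ x‖ ≤ H1.dist φ' φ := by
  set e : ℝ → ℂ := fun k => Complex.exp (Complex.I * ((k * x + k ^ 2 * t : ℝ) : ℂ)) with he
  have hnorm_e : ∀ k, ‖e k‖ = 1 := by
    intro k
    rw [he]
    simp only
    rw [Complex.norm_exp]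
    simp [Complex.mul_re, pow_two, Complex.mul_im]
  have hec : Continuous e := by fun_prop
  have hint' : Integrable (fun k => e k * φ'.hat k) :=
    φ'.hat_integrable.bdd_mul hec.aestronglyMeasurable (Filter.Eventually.of_forall fun k => (hnorm_e k).le)
  have hint : Integrable (fun k => e k * φ.hat k) :=
    φ.hat_integrable.bdd_mul hec.aestronglyMeasurable (Filter.Eventually.of_forall fun k => (hnorm_e k).le)
  have hD_meas : AEStronglyMeasurable (fun k : ℝ => φ'.hat k - φ.hat k) volume :=
    φ'.meas.sub φ.meas
  have hD_int := sub_hat_sq_integrable φ' φ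
  have hD0 : (0:ℝ) ≤ ∫ k : ℝ, (1 + k ^ 2) * ‖φ'.hat k - φ.hat k‖ ^ 2 :=
    integral_nonneg fun k => by positivity
  have hWsub : W t φ' x - W t φ x
      = ((((2 * π)⁻¹ : ℝ)) : ℂ) * ∫ k : ℝ, e k * (φ'.hat k - φ.hat k) := by
    rw [W, W, ← mul_sub, ← integral_sub hint' hint]
    simp only [mul_sub]
  have hnc : ‖((((2 * π)⁻¹ : ℝ)) : ℂ)‖ = (2*π)⁻¹ := by
    rw [Complex.norm_real, Real.norm_eq_abs, abs_of_nonneg (by positivity)]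
  have h2π : (0:ℝ) < 2*π := by positivity
  have step1 : ‖W t φ' x - W t φ x‖ ≤ (2*π)⁻¹ * ∫ k : ℝ, ‖φ'.hat k - φ.hat k‖ := by
    rw [hWsub, norm_mul, hnc]
    refine mul_le_mul_of_nonneg_left ?_ (inv_nonneg.2 (by positivity : (0:ℝ) ≤ 2*π))
    calc ‖∫ k : ℝ, e k * (φ'.hat k - φ.hat k)‖ ≤ ∫ k : ℝ, ‖e k * (φ'.hat k - φ.hat k)‖ :=
          norm_integral_le_integral_norm _
      _ = ∫ k : ℝ, ‖φ'.hat k - φ.hat k‖ := by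
          refine integral_congr_ae (Filter.Eventually.of_forall fun k => ?_)
          simp only [norm_mul, hnorm_e k, one_mul]
  have step2 := integral_norm_le_sqrt _ hD_meas hD_int
  have key : (2*π)⁻¹ * Real.sqrt π ≤ Real.sqrt (2*π)⁻¹ := by
    rw [Real.le_sqrt (by positivity) (by positivity)]
    rw [mul_pow, Real.sq_sqrt pi_pos.le]
    have key3 : ((2*π)⁻¹)^2 * (2*π) = (2*π)⁻¹ := by
      rw [pow_two, mul_assoc, inv_mul_cancel₀ h2π.ne', mul_one]
    nlinarith [sq_nonneg ((2*π)⁻¹), pi_pos]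
  calc ‖W t φ' x - W t φ x‖
      ≤ (2*π)⁻¹ * ∫ k : ℝ, ‖φ'.hat k - φ.hat k‖ := step1
    _ ≤ (2*π)⁻¹ * (Real.sqrt π * Real.sqrt (∫ k : ℝ, (1 + k ^ 2) * ‖φ'.hat k - φ.hat k‖ ^ 2)) :=
        mul_le_mul_of_nonneg_left step2 (inv_nonneg.2 (by positivity : (0:ℝ) ≤ 2*π))
    _ = ((2*π)⁻¹ * Real.sqrt π) * Real.sqrt (∫ k : ℝ, (1 + k ^ 2) * ‖φ'.hat k - φ.hat k‖ ^ 2) := by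
        ring
    _ ≤ Real.sqrt (2*π)⁻¹ * Real.sqrt (∫ k : ℝ, (1 + k ^ 2) * ‖φ'.hat k - φ.hat k‖ ^ 2) :=
        mul_le_mul_of_nonneg_right key (Real.sqrt_nonneg _)
    _ = H1.dist φ' φ := by
        rw [H1.dist, ← Real.sqrt_mul (by positivity) _]

lemma duhamel_integrand_integrable {F : ℂ → ℂ} (hFc : Continuous F) {U₁ : ℝ}
    (hFb : ∀ z, ‖F z‖ ≤ U₁) {ψ : ℝ → ℝ → ℂ} {τ : ℝ}
    (hψc : ContinuousOn (fun p : ℝ × ℝ => ψ p.1 p.2) (Set.univ ×ˢ Icc 0 τ))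
    {t : ℝ} (ht : t ∈ Icc 0 τ) (x : ℝ) :
    IntervalIntegrable (fun s => freeKernel s x * F (ψ 0 (t - s))) volume 0 t := by
  constructor
  swap
  · rw [Set.Ioc_eq_empty (not_lt.2 ht.1)]
    exact integrableOn_empty
  have hg : ContinuousOn (fun s : ℝ => ψ 0 (t - s)) (Ioc 0 t) := by
    have hmap : Continuous (fun s : ℝ => ((0:ℝ), t - s)) := by fun_prop
    refine hψc.comp hmap.continuousOn ?_
    intro s hs
    have h1 : (0:ℝ) ≤ t - s := by linarith [hs.2]
    have h2 : t - s ≤ τ := by linarith [hs.1, ht.2]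
    exact Set.mem_prod.2 ⟨Set.mem_univ _, h1, h2⟩
  have hcont : ContinuousOn (fun s => freeKernel s x * F (ψ 0 (t - s))) (Ioc 0 t) :=
    (freeKernel_continuousOn x t).mul (hFc.comp_continuousOn hg)
  refine Integrable.mono' (g := fun s => U₁ * (2*π) ^ (-(1/2):ℝ) * s ^ (-(1/2):ℝ))
    ?_ (hcont.aestronglyMeasurable measurableSet_Ioc) ?_
  · exact ((intervalIntegral.intervalIntegrable_rpow' (by norm_num)).1).const_mul _
  · rw [ae_restrict_iff' measurableSet_Ioc]
    filter_upwards with s hs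
    rw [norm_mul, norm_freeKernel hs.1 x]
    calc (2*π) ^ (-(1/2):ℝ) * s ^ (-(1/2):ℝ) * ‖F (ψ 0 (t-s))‖
        ≤ (2*π) ^ (-(1/2):ℝ) * s ^ (-(1/2):ℝ) * U₁ :=
          mul_le_mul_of_nonneg_left (hFb _)
            (mul_nonneg (Real.rpow_nonneg (by positivity) _) (Real.rpow_nonneg hs.1.le _))
      _ = U₁ * (2*π) ^ (-(1/2):ℝ) * s ^ (-(1/2):ℝ) := by ring

lemma key_estimate (U : ℂ → ℝ) (U₁ U₂ : ℝ) (hU : ContDiff ℝ 2 U)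
    (hU1 : ∀ z : ℂ, ‖grad U z‖ ≤ U₁)
    (hU2 : ∀ z : ℂ, ‖fderiv ℝ (grad U) z‖ ≤ U₂) (hU2pos : 0 < U₂)
    (φ φ' : H1) (ψ ψ' : ℝ → ℝ → ℂ)
    (hψb : CbOn ψ (Set.Icc 0 (1 / (4 * U₂ ^ 2))))
    (hψ'b : CbOn ψ' (Set.Icc 0 (1 / (4 * U₂ ^ 2))))
    (hψdu : IsDuhamelSolution (nonlin U) φ ψ (Set.Icc 0 (1 / (4 * U₂ ^ 2))))
    (hψ'du : IsDuhamelSolution (nonlin U) φ' ψ' (Set.Icc 0 (1 / (4 * U₂ ^ 2))))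
    (B : ℝ) (hB0 : 0 ≤ B)
    (hB : ∀ r ∈ Set.Icc (0:ℝ) (1 / (4 * U₂ ^ 2)), ‖ψ' 0 r - ψ 0 r‖ ≤ B)
    (x t : ℝ) (ht : t ∈ Set.Icc (0:ℝ) (1 / (4 * U₂ ^ 2))) :
    ‖ψ' x t - ψ x t‖ ≤ H1.dist φ' φ + (2*π) ^ (-(1/2):ℝ) * B := by
  have ht0 : 0 ≤ t := ht.1
  have hFc : Continuous (nonlin U) := ((grad_differentiable U hU).continuous).neg
  have hFb : ∀ z, ‖nonlin U z‖ ≤ U₁ := fun z => by rw [nonlin, norm_neg]; exact hU1 z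
  have hi' := duhamel_integrand_integrable hFc hFb hψ'b.1 ht x
  have hi := duhamel_integrand_integrable hFc hFb hψb.1 ht x
  have heq : ψ' x t - ψ x t = (W t φ' x - W t φ x)
      - ∫ s in (0:ℝ)..t, (freeKernel s x * nonlin U (ψ' 0 (t - s))
          - freeKernel s x * nonlin U (ψ 0 (t - s))) := by
    rw [hψ'du x t ht, hψdu x t ht, intervalIntegral.integral_sub hi' hi]
    ring
  rw [heq]
  refine (norm_sub_le _ _).trans (add_le_add (W_sub_norm_le φ' φ t x) ?_)
  have hbint : IntervalIntegrable
      (fun s : ℝ => (2*π) ^ (-(1/2):ℝ) * (U₂ * B) * s ^ (-(1/2):ℝ)) volume 0 t :=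
    (intervalIntegral.intervalIntegrable_rpow' (by norm_num)).const_mul _
  have hbound : ∀ᵐ s ∂(volume.restrict (Set.uIoc (0:ℝ) t)),
      ‖freeKernel s x * nonlin U (ψ' 0 (t - s)) - freeKernel s x * nonlin U (ψ 0 (t - s))‖
        ≤ (2*π) ^ (-(1/2):ℝ) * (U₂ * B) * s ^ (-(1/2):ℝ) := by
    rw [Set.uIoc_of_le ht0, ae_restrict_iff' measurableSet_Ioc]
    filter_upwards with s hs
    rw [← mul_sub, norm_mul, norm_freeKernel hs.1 x]
    have hts : t - s ∈ Set.Icc (0:ℝ) (1 / (4 * U₂ ^ 2)) :=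
      ⟨by linarith [hs.2], by linarith [hs.1, ht.2]⟩
    have hlip := nonlin_lipschitz U U₂ hU hU2 (ψ' 0 (t - s)) (ψ 0 (t - s))
    have hBB : ‖ψ' 0 (t-s) - ψ 0 (t-s)‖ ≤ B := hB _ hts
    calc (2*π) ^ (-(1/2):ℝ) * s ^ (-(1/2):ℝ) * ‖nonlin U (ψ' 0 (t-s)) - nonlin U (ψ 0 (t-s))‖
        ≤ (2*π) ^ (-(1/2):ℝ) * s ^ (-(1/2):ℝ) * (U₂ * B) := by
          refine mul_le_mul_of_nonneg_left (hlip.trans ?_)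
            (mul_nonneg (Real.rpow_nonneg (by positivity) _) (Real.rpow_nonneg hs.1.le _))
          exact mul_le_mul_of_nonneg_left hBB hU2pos.le
      _ = (2*π) ^ (-(1/2):ℝ) * (U₂ * B) * s ^ (-(1/2):ℝ) := by ring
  have hstep := intervalIntegral.norm_integral_le_abs_of_norm_le hbound hbint
  refine hstep.trans ?_
  have hval : ∫ s in (0:ℝ)..t, (2*π) ^ (-(1/2):ℝ) * (U₂ * B) * s ^ (-(1/2):ℝ)
      = (2*π) ^ (-(1/2):ℝ) * (U₂ * B) * (2 * Real.sqrt t) := by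
    rw [intervalIntegral.integral_const_mul, integral_rpow (Or.inl (by norm_num)),
      Real.sqrt_eq_rpow, Real.zero_rpow (by norm_num),
      show (-(1/2:ℝ) + 1) = (1/2:ℝ) by norm_num]
    ring
  rw [hval, abs_of_nonneg (mul_nonneg (mul_nonneg (Real.rpow_nonneg (by positivity) _)
    (mul_nonneg hU2pos.le hB0)) (by positivity))]
  have hsq : Real.sqrt t ≤ 1/(2*U₂) := by
    have hτ : Real.sqrt (1 / (4 * U₂ ^ 2)) = 1/(2*U₂) := by
      rw [show (1 / (4 * U₂ ^ 2) : ℝ) = (1/(2*U₂))^2 by field_simp; ring]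
      exact Real.sqrt_sq (by positivity)
    calc Real.sqrt t ≤ Real.sqrt (1 / (4 * U₂ ^ 2)) := Real.sqrt_le_sqrt ht.2
      _ = 1/(2*U₂) := hτ
  calc (2*π) ^ (-(1/2):ℝ) * (U₂ * B) * (2 * Real.sqrt t)
      ≤ (2*π) ^ (-(1/2):ℝ) * (U₂ * B) * (2 * (1/(2*U₂))) := by
        refine mul_le_mul_of_nonneg_left (by linarith)
          (mul_nonneg (Real.rpow_nonneg (by positivity) _) (mul_nonneg hU2pos.le hB0))
    _ = (2*π) ^ (-(1/2):ℝ) * B := by field_simp [hU2pos.ne']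

/-- **Continuous dependence in `C_b`.**
Under the bounds `sup|∇^kU| ≤ U_k`, `k = 0,1,2`, `U₂ > 0`, and with
`τ = 1/(4U₂²)`, the map `φ ↦ ψ` taking the initial data to the unique solution
of the Duhamel equation is continuous from `H¹(ℝ)` to `C_b(ℝ×[0,τ];ℂ)`. -/
theorem continuous_dependence_Cb
    (U : ℂ → ℝ) (u : ℝ → ℝ) (U₀ U₁ U₂ : ℝ)
    (hU : ContDiff ℝ 2 U)
    (hUinv : ∀ z : ℂ, U z = u (‖z‖ ^ 2))
    (hU0 : ∀ z : ℂ, |U z| ≤ U₀)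
    (hU1 : ∀ z : ℂ, ‖grad U z‖ ≤ U₁)
    (hU2 : ∀ z : ℂ, ‖fderiv ℝ (grad U) z‖ ≤ U₂)
    (hU2pos : 0 < U₂) :
    ∀ (φ : H1) (ψ : ℝ → ℝ → ℂ),
      CbOn ψ (Set.Icc 0 (1 / (4 * U₂ ^ 2))) →
      IsDuhamelSolution (nonlin U) φ ψ (Set.Icc 0 (1 / (4 * U₂ ^ 2))) →
      ∀ δ > (0 : ℝ), ∃ η > (0 : ℝ),
        ∀ (φ' : H1) (ψ' : ℝ → ℝ → ℂ),
          CbOn ψ' (Set.Icc 0 (1 / (4 * U₂ ^ 2))) →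
          IsDuhamelSolution (nonlin U) φ' ψ' (Set.Icc 0 (1 / (4 * U₂ ^ 2))) →
          H1.dist φ' φ < η →
          ∀ x : ℝ, ∀ t ∈ Set.Icc (0 : ℝ) (1 / (4 * U₂ ^ 2)),
            ‖ψ' x t - ψ x t‖ < δ := by
  intro φ ψ hψb hψdu δ hδ
  have hq0 : (0:ℝ) ≤ (2*π) ^ (-(1/2):ℝ) := Real.rpow_nonneg (by positivity) _
  have hq1 : (2*π) ^ (-(1/2):ℝ) < 1 :=
    Real.rpow_lt_one_of_one_lt_of_neg (by nlinarith [pi_gt_three]) (by norm_num)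
  set q : ℝ := (2*π) ^ (-(1/2):ℝ) with hqdef
  refine ⟨δ * (1 - q), mul_pos hδ (by linarith), ?_⟩
  intro φ' ψ' hψ'b hψ'du hdist x t ht
  have hτ0 : (0:ℝ) ≤ 1 / (4 * U₂ ^ 2) := by positivity
  obtain ⟨M₁, hM₁⟩ := hψb.2
  obtain ⟨M₂, hM₂⟩ := hψ'b.2
  set Sv : Set ℝ := (fun r => ‖ψ' 0 r - ψ 0 r‖) '' (Set.Icc 0 (1 / (4 * U₂ ^ 2))) with hSv
  have hne : Sv.Nonempty := ⟨_, ⟨0, ⟨le_refl (0:ℝ), hτ0⟩, rfl⟩⟩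
  have hbdd : BddAbove Sv := by
    refine ⟨M₂ + M₁, ?_⟩
    rintro _ ⟨r, hr, rfl⟩
    exact (norm_sub_le _ _).trans (add_le_add (hM₂ 0 r hr) (hM₁ 0 r hr))
  set B := sSup Sv with hBdef
  have hmem0 : ‖ψ' 0 0 - ψ 0 0‖ ∈ Sv := ⟨0, ⟨le_refl (0:ℝ), hτ0⟩, rfl⟩
  have hB0 : 0 ≤ B := (norm_nonneg _).trans (le_csSup hbdd hmem0)
  have hBub : ∀ r ∈ Set.Icc (0:ℝ) (1 / (4 * U₂ ^ 2)), ‖ψ' 0 r - ψ 0 r‖ ≤ B :=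
    fun r hr => le_csSup hbdd ⟨r, hr, rfl⟩
  have hkey := key_estimate U U₁ U₂ hU hU1 hU2 hU2pos φ φ' ψ ψ' hψb hψ'b hψdu hψ'du B hB0 hBub
  have hBle : B ≤ H1.dist φ' φ + q * B := by
    refine csSup_le hne ?_
    rintro _ ⟨r, hr, rfl⟩
    exact hkey 0 r hr
  have h1q : (0:ℝ) < 1 - q := by linarith
  have hBδ : B < δ := by
    have h2 : B * (1 - q) ≤ H1.dist φ' φ := by nlinarith
    nlinarith [hdist]
  calc ‖ψ' x t - ψ x t‖ ≤ H1.dist φ' φ + q * B := hkey x t ht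
    _ < δ * (1 - q) + q * δ := by
        nlinarith [mul_le_mul_of_nonneg_left hBδ.le hq0, hdist]
    _ = δ := by ring

end SNLS
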